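/- arXiv:2403.05113 — 3 statements merged into one kernel-verified Lean document; each statement's English description precedes it below -/
import Mathlib

section
/- For every n ≥ 3, the set partition word p = (a_1 a_2 ⋯ a_n)^2 (the concatenation of two copies of a word with n distinct letters) is not sorted after n−1 applications of φ_{aba}; that is, φ_{aba}^{n−1}(p) is not sorted. -/
/-- West's stack-sorting map, implemented with an explicit stack (top = head). -/
def sWestAux : List ℕ → List ℕ → List ℕ
  | [], st => st
  | x :: xs, [] => sWestAux xs [x]
  | x :: xs, t :: st =>
      if t < x then t :: sWestAux (x :: xs) st
      else sWestAux xs (x :: t :: st)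
termination_by l st => 2 * l.length + st.length

def sWest (l : List ℕ) : List ℕ := sWestAux l []

/-- A word contains a subsequence equivalent to `aba`. -/
def HasABA (l : List ℕ) : Prop :=
  ∃ i j k : Fin l.length, i < j ∧ j < k ∧ l.get i = l.get k ∧ l.get j ≠ l.get i

instance (l : List ℕ) : Decidable (HasABA l) := by
  unfold HasABA; infer_instance

/-- Xia's stack-sorting map φ_{aba}, with explicit stack (top = head). -/
def phiAux : List ℕ → List ℕ → List ℕ
  | [], st => st
  | x :: xs, [] => phiAux xs [x]
  | x :: xs, t :: st =>
      if HasABA (x :: t :: st) then t :: phiAux (x :: xs) st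
      else phiAux xs (x :: t :: st)
termination_by l st => 2 * l.length + st.length

def phi (p : List ℕ) : List ℕ := phiAux p []

/-- A set partition word is sorted: all occurrences of each letter are consecutive. -/
def SortedWord (p : List ℕ) : Prop :=
  ∀ i j k : Fin p.length, i < j → j < k → p.get i = p.get k → p.get j = p.get i

/-- Number of distinct letters. -/
def Nletters (p : List ℕ) : ℕ := p.toFinset.card

def Avoids231 (l : List ℕ) : Prop :=
  ¬ ∃ i j k : Fin l.length, i < j ∧ j < k ∧ l.get k < l.get i ∧ l.get i < l.get j

/-!
Write `frameWord a u b c = A u B u C`, where `A`, `B`, `C` double every letter of `a`, `b`, `c`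
and all letters involved are distinct. For `u = x :: u'`, φ_{aba} pushes the `aba`-free prefix
`A u B`; the second `x` then pops everything above the buried `x`, namely `B` and `u'` reversed,
and what is left is pushed and emptied, giving `frameWord b.reverse u'.reverse c.reverse
(x :: a.reverse)`. Since `w w = frameWord [] w [] []`, after `k` steps the middle word has
`n - k` letters, and from the second step on the block `B` is nonempty. After `n - 1 ≥ 2` steps
the word is therefore `A z B z C` with some letter `m ≠ z` in `B`, and `z m z` is an `aba`
pattern.
-/

lemma hasABA_iff {l : List ℕ} : HasABA l ↔ ∃ a b, a ≠ b ∧ [a, b, a].Sublist l := by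
  constructor
  · rintro ⟨i, j, k, hij, hjk, hik, hne⟩
    refine ⟨l.get i, l.get j, Ne.symm hne, ?_⟩
    have := List.map_getElem_sublist (l := l) (is := [i, j, k])
      (by simpa using ⟨⟨hij, hij.trans hjk⟩, hjk⟩)
    nth_rw 2 [hik]
    simpa using this
  · rintro ⟨a, b, hab, h⟩
    obtain ⟨f, hf⟩ := List.sublist_iff_exists_fin_orderEmbedding_get_eq.mp h
    refine ⟨f ⟨0, by simp⟩, f ⟨1, by simp⟩, f ⟨2, by simp⟩, f.strictMono (by simp),
      f.strictMono (by simp), ?_, ?_⟩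
    · rw [← hf, ← hf]; rfl
    · rw [← hf, ← hf]; exact hab.symm

lemma sortedWord_iff_not_hasABA {l : List ℕ} : SortedWord l ↔ ¬ HasABA l := by
  simp only [SortedWord, HasABA, not_exists, not_and, not_not]

lemma HasABA.mono {l l' : List ℕ} (h : HasABA l) (hl : l.Sublist l') : HasABA l' := by
  obtain ⟨a, b, hab, h⟩ := hasABA_iff.mp h
  exact hasABA_iff.mpr ⟨a, b, hab, h.trans hl⟩

@[simp] lemma hasABA_reverse {l : List ℕ} : HasABA l.reverse ↔ HasABA l := by
  simp only [hasABA_iff]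
  exact exists₂_congr fun a b => and_congr_right fun _ => by
    simpa using (List.reverse_sublist (l₁ := [a, b, a]) (l₂ := l.reverse)).symm

lemma List.Nodup.not_hasABA {l : List ℕ} (h : l.Nodup) : ¬ HasABA l := by
  rintro hl
  obtain ⟨a, b, -, hs⟩ := hasABA_iff.mp hl
  simpa using h.sublist hs

lemma not_hasABA_append {l₁ l₂ : List ℕ} (h₁ : ¬ HasABA l₁) (h₂ : ¬ HasABA l₂)
    (h : l₁.Disjoint l₂) : ¬ HasABA (l₁ ++ l₂) := by
  rw [hasABA_iff]
  rintro ⟨a, b, hab, hs⟩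
  obtain ⟨s, t, hst, hs₁, ht₂⟩ := List.sublist_append_iff.mp hs
  rcases s with _ | ⟨x, _ | ⟨y, _ | ⟨z, s⟩⟩⟩
  · exact h₂ (hasABA_iff.mpr ⟨a, b, hab, by simpa [hst] using ht₂⟩)
  · simp only [List.cons_append, List.nil_append, List.cons.injEq] at hst
    obtain ⟨rfl, rfl⟩ := hst
    exact h (List.singleton_sublist.mp hs₁) (ht₂.subset (by simp : a ∈ [b, a]))
  · simp only [List.cons_append, List.nil_append, List.cons.injEq] at hst
    obtain ⟨rfl, rfl, rfl⟩ := hst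
    exact h (hs₁.subset (by simp : a ∈ [a, b])) (List.singleton_sublist.mp ht₂)
  · simp only [List.cons_append, List.cons.injEq] at hst
    obtain ⟨rfl, rfl, rfl, hst⟩ := hst
    obtain ⟨rfl, rfl⟩ := List.append_eq_nil_iff.mp hst.symm
    exact h₁ (hasABA_iff.mpr ⟨a, b, hab, by simpa using hs₁⟩)

def pairWord (cs : List ℕ) : List ℕ := cs.flatMap fun c => [c, c]

@[simp] lemma pairWord_nil : pairWord [] = [] := rfl

@[simp] lemma pairWord_cons (c : ℕ) (cs : List ℕ) :
    pairWord (c :: cs) = c :: c :: pairWord cs := rfl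

@[simp] lemma pairWord_append (a b : List ℕ) : pairWord (a ++ b) = pairWord a ++ pairWord b := by
  simp [pairWord]

@[simp] lemma mem_pairWord {x : ℕ} {cs : List ℕ} : x ∈ pairWord cs ↔ x ∈ cs := by
  simp [pairWord]

@[simp] lemma pairWord_reverse (cs : List ℕ) : (pairWord cs).reverse = pairWord cs.reverse := by
  induction cs with
  | nil => rfl
  | cons c cs ih => simp [ih]

lemma disjoint_pairWord_left {a l : List ℕ} : (pairWord a).Disjoint l ↔ a.Disjoint l := by
  simp [List.disjoint_left]

lemma disjoint_pairWord_right {a l : List ℕ} : l.Disjoint (pairWord a) ↔ l.Disjoint a := by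
  simp [List.disjoint_right]

lemma not_hasABA_pairWord {cs : List ℕ} (h : cs.Nodup) : ¬ HasABA (pairWord cs) := by
  induction cs with
  | nil => simp [HasABA]
  | cons c cs ih =>
    obtain ⟨hc, hcs⟩ := List.nodup_cons.mp h
    have hcc : ¬ HasABA [c, c] := fun hcc => by
      obtain ⟨a, b, -, hs⟩ := hasABA_iff.mp hcc
      simpa using hs.length_le
    exact not_hasABA_append hcc (ih hcs) (by simpa [disjoint_pairWord_right] using hc)

lemma not_hasABA_pairWord_append_pairWord {a u b : List ℕ} (h : (a ++ u ++ b).Nodup) :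
    ¬ HasABA (pairWord a ++ u ++ pairWord b) := by
  rw [List.nodup_append'] at h
  obtain ⟨hau, hb, hdisj⟩ := h
  rw [List.nodup_append'] at hau
  obtain ⟨ha, hu, hdisj'⟩ := hau
  refine not_hasABA_append
    (not_hasABA_append (not_hasABA_pairWord ha) hu.not_hasABA (disjoint_pairWord_left.mpr hdisj'))
    (not_hasABA_pairWord hb) ?_
  rw [disjoint_pairWord_right, List.disjoint_append_left, disjoint_pairWord_left]
  exact List.disjoint_append_left.mp hdisj

@[simp] lemma phiAux_nil (st : List ℕ) : phiAux [] st = st := by rw [phiAux]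

lemma phiAux_push {x : ℕ} {st : List ℕ} (h : ¬ HasABA (x :: st)) (xs : List ℕ) :
    phiAux (x :: xs) st = phiAux xs (x :: st) := by
  cases st with
  | nil => rw [phiAux]
  | cons t st => rw [phiAux, if_neg h]

lemma phiAux_pop {x t : ℕ} {st : List ℕ} (h : HasABA (x :: t :: st)) (xs : List ℕ) :
    phiAux (x :: xs) (t :: st) = t :: phiAux (x :: xs) st := by
  rw [phiAux, if_pos h]

lemma phiAux_append_of_not_hasABA {l st : List ℕ} (h : ¬ HasABA (l.reverse ++ st))
    (rest : List ℕ) : phiAux (l ++ rest) st = phiAux rest (l.reverse ++ st) := by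
  induction l generalizing st with
  | nil => rfl
  | cons x l ih =>
    have hx : ¬ HasABA (x :: st) := fun hx => h (hx.mono (by simp))
    rw [List.cons_append, phiAux_push hx, ih (by simpa using h)]
    simp

lemma phiAux_append_stack_of_mem {x : ℕ} {d st : List ℕ} (hx : x ∈ st) (hd : x ∉ d)
    (xs : List ℕ) : phiAux (x :: xs) (d ++ st) = d ++ phiAux (x :: xs) st := by
  induction d with
  | nil => rfl
  | cons t d ih =>
    rw [List.mem_cons, not_or] at hd
    obtain ⟨hxt, hd⟩ := hd
    have hpop : HasABA (x :: t :: (d ++ st)) :=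
      hasABA_iff.mpr ⟨x, t, hxt,
        ((List.singleton_sublist.mpr (List.mem_append_right d hx)).cons_cons t).cons_cons x⟩
    rw [List.cons_append, phiAux_pop hpop, ih hd, List.cons_append]

def frameWord (a u b c : List ℕ) : List ℕ := pairWord a ++ u ++ pairWord b ++ u ++ pairWord c

lemma phi_frameWord {a u b c : List ℕ} {x : ℕ} (h : (a ++ x :: u ++ b ++ c).Nodup) :
    phi (frameWord a (x :: u) b c) = frameWord b.reverse u.reverse c.reverse (x :: a.reverse) := by
  have hpush₁ : ¬ HasABA ((pairWord a ++ x :: u ++ pairWord b).reverse ++ []) := by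
    rw [List.append_nil, hasABA_reverse]
    exact not_hasABA_pairWord_append_pairWord (h.sublist (by simp))
  have hpush₂ : ¬ HasABA ((x :: (u ++ pairWord c)).reverse ++ x :: pairWord a.reverse) := by
    have e : (x :: (u ++ pairWord c)).reverse ++ x :: pairWord a.reverse
        = (pairWord (a ++ [x]) ++ u ++ pairWord c).reverse := by simp
    rw [e, hasABA_reverse]
    exact not_hasABA_pairWord_append_pairWord (h.sublist (by simp))
  have hx : x ∉ pairWord b.reverse ++ u.reverse := by
    have hxub : x ∉ u ++ b :=
      (List.nodup_cons.mp (h.sublist (by simp : (x :: (u ++ b)).Sublist _))).1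
    simpa [or_comm] using hxub
  calc phi (frameWord a (x :: u) b c)
      = phiAux ((pairWord a ++ x :: u ++ pairWord b) ++ x :: (u ++ pairWord c)) [] := by
        simp [phi, frameWord]
    _ = phiAux (x :: (u ++ pairWord c))
          ((pairWord b.reverse ++ u.reverse) ++ x :: pairWord a.reverse) := by
        rw [phiAux_append_of_not_hasABA hpush₁]
        simp
    _ = (pairWord b.reverse ++ u.reverse) ++
          phiAux (x :: (u ++ pairWord c)) (x :: pairWord a.reverse) :=
        phiAux_append_stack_of_mem List.mem_cons_self hx _
    _ = frameWord b.reverse u.reverse c.reverse (x :: a.reverse) := by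
        rw [← List.append_nil (x :: _), phiAux_append_of_not_hasABA hpush₂, phiAux_nil]
        simp [frameWord]

lemma hasABA_frameWord {a u b c : List ℕ} (hu : u ≠ []) (hb : b ≠ []) (hub : u.Disjoint b) :
    HasABA (frameWord a u b c) := by
  obtain ⟨z, hz⟩ := List.exists_mem_of_ne_nil u hu
  obtain ⟨m, hm⟩ := List.exists_mem_of_ne_nil b hb
  refine hasABA_iff.mpr ⟨z, m, fun hzm => hub hz (hzm ▸ hm), ?_⟩
  have hzmz : ([z] ++ [m] ++ [z]).Sublist ((pairWord a ++ u) ++ pairWord b ++ (u ++ pairWord c)) :=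
    ((List.singleton_sublist.mpr (by simp [hz])).append
      (List.singleton_sublist.mpr (by simp [hm]))).append
      (List.singleton_sublist.mpr (by simp [hz]))
  simpa [frameWord] using hzmz

lemma exists_phi_iterate_eq_frameWord {w : List ℕ} (hw : w.Nodup) {k : ℕ} (hk : k < w.length) :
    ∃ a u b c, phi^[k] (w ++ w) = frameWord a u b c ∧ u.length + k = w.length ∧
      (a ++ u ++ b ++ c).Nodup ∧ (1 ≤ k → c ≠ []) ∧ (2 ≤ k → b ≠ []) := by
  induction k with
  | zero =>
    exact ⟨[], w, [], [], by simp [frameWord], rfl, by simpa using hw, by omega, by omega⟩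
  | succ k ih =>
    obtain ⟨a, u, b, c, hphi, hlen, hnd, hc, -⟩ := ih (by omega)
    obtain ⟨x, u, rfl⟩ : ∃ x u', u = x :: u' :=
      List.exists_cons_of_ne_nil (List.ne_nil_of_length_pos (by omega))
    refine ⟨b.reverse, u.reverse, c.reverse, x :: a.reverse, ?_, ?_, ?_, by simp, ?_⟩
    · rw [Function.iterate_succ_apply', hphi, phi_frameWord hnd]
    · simp only [List.length_reverse]
      simp only [List.length_cons] at hlen
      omega
    · refine (List.perm_iff_count.mpr fun y => ?_).nodup hnd
      simp only [List.count_append, List.count_reverse, List.count_cons]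
      ring
    · simpa using hc

/-- For n ≥ 3, (a₁⋯aₙ)² is not sorted after n-1 applications of φ_{aba}. -/
theorem stmt7 (n : ℕ) (hn : 3 ≤ n) (w : List ℕ) (hw : w.Nodup) (hl : w.length = n) :
    ¬ SortedWord (phi^[n - 1] (w ++ w)) := by
  obtain ⟨a, u, b, c, hphi, hlen, hnd, -, hb⟩ :=
    exists_phi_iterate_eq_frameWord hw (k := n - 1) (by omega)
  have hu : u ≠ [] := List.ne_nil_of_length_pos (by omega)
  rw [hphi, sortedWord_iff_not_hasABA, not_not]
  exact hasABA_frameWord hu (hb (by omega))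
    (List.disjoint_of_nodup_append (hnd.sublist (by simp)))
end

section
/- If p is a set partition word with exactly 2 distinct letters, then φ_{aba}(p) is sorted. -/
/-!
Let `a` be the first letter of `p` and `b` the other one. Throughout the run the stack (top first)
has the form `b^j a^(i+1)`: reading `b` pushes it without creating an `aba`, while reading `a`
creates `a b ⋯ a` until every `b` has been popped, after which `a` is pushed. So only `b`s are
output before the input is exhausted, and the final stack `b^j a^(i+1)` is flushed after them:
`φ_{aba}(p)` is all `b`s followed by all `a`s.
-/

theorem hasABA_iff_not_sortedWord (l : List ℕ) : HasABA l ↔ ¬ SortedWord l := by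
  simp only [HasABA, SortedWord, not_forall, exists_prop]

theorem getElem_replicate_append_replicate (a b m n k : ℕ)
    (hk : k < (List.replicate m a ++ List.replicate n b).length) :
    (List.replicate m a ++ List.replicate n b)[k] = if k < m then a else b := by
  split_ifs with hkm
  · rw [List.getElem_append_left (by simpa using hkm), List.getElem_replicate]
  · rw [List.getElem_append_right (by simpa using hkm), List.getElem_replicate]

theorem sortedWord_replicate_append_replicate (a b m n : ℕ) :
    SortedWord (List.replicate m a ++ List.replicate n b) := by
  intro i j k hij hjk hik
  simp only [List.get_eq_getElem, getElem_replicate_append_replicate] at hik ⊢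
  have : (i : ℕ) < j := hij
  have : (j : ℕ) < k := hjk
  split_ifs at hik ⊢ <;> first | rfl | exact hik | omega

theorem not_hasABA_replicate_append_replicate (a b m n : ℕ) :
    ¬ HasABA (List.replicate m a ++ List.replicate n b) := fun h =>
  (hasABA_iff_not_sortedWord _).mp h (sortedWord_replicate_append_replicate a b m n)

theorem hasABA_cons_cons_replicate_append_replicate {a b : ℕ} (hab : a ≠ b) (j i : ℕ) :
    HasABA (a :: b :: (List.replicate j b ++ List.replicate (i + 1) a)) := by
  refine ⟨⟨0, by simp⟩, ⟨1, by simp⟩, ⟨j + 2, by simp⟩, by simp,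
    by simp [Fin.lt_def], by simp, by simpa using hab.symm⟩

theorem phiAux_cons_of_not_hasABA {x t : ℕ} {xs st : List ℕ} (h : ¬ HasABA (x :: t :: st)) :
    phiAux (x :: xs) (t :: st) = phiAux xs (x :: t :: st) := by
  rw [phiAux, if_neg h]

theorem phiAux_cons_of_hasABA {x t : ℕ} {xs st : List ℕ} (h : HasABA (x :: t :: st)) :
    phiAux (x :: xs) (t :: st) = t :: phiAux (x :: xs) st := by
  rw [phiAux, if_pos h]

section TwoLetters

variable {a b : ℕ}

theorem phiAux_cons_replicate_append_replicate (xs : List ℕ) (j i : ℕ) :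
    phiAux (b :: xs) (List.replicate j b ++ List.replicate (i + 1) a)
      = phiAux xs (List.replicate (j + 1) b ++ List.replicate (i + 1) a) := by
  cases j with
  | zero => exact phiAux_cons_of_not_hasABA (not_hasABA_replicate_append_replicate b a 1 (i + 1))
  | succ j =>
    exact phiAux_cons_of_not_hasABA (not_hasABA_replicate_append_replicate b a (j + 2) (i + 1))

theorem phiAux_cons_replicate_append_replicate_of_ne (hab : a ≠ b) (xs : List ℕ) (j i : ℕ) :
    phiAux (a :: xs) (List.replicate j b ++ List.replicate (i + 1) a)
      = List.replicate j b ++ phiAux xs (List.replicate (i + 1 + 1) a) := by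
  induction j with
  | zero =>
    simpa [List.replicate_succ] using
      phiAux_cons_of_not_hasABA (xs := xs) (not_hasABA_replicate_append_replicate b a 0 (i + 2))
  | succ j ih =>
    rw [List.replicate_succ, List.cons_append,
      phiAux_cons_of_hasABA (hasABA_cons_cons_replicate_append_replicate hab j i), ih]
    rfl

theorem phiAux_replicate_append_replicate (hab : a ≠ b) (l : List ℕ)
    (hl : ∀ x ∈ l, x = a ∨ x = b) (j i : ℕ) :
    phiAux l (List.replicate j b ++ List.replicate (i + 1) a)
      = List.replicate (j + l.count b) b ++ List.replicate (i + 1 + l.count a) a := by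
  induction l generalizing j i with
  | nil => simp [phiAux]
  | cons x xs ih =>
    have hxs : ∀ y ∈ xs, y = a ∨ y = b := fun y hy => hl y (List.mem_cons_of_mem x hy)
    rcases hl x List.mem_cons_self with rfl | rfl
    · have ih' := ih hxs 0 (i + 1)
      rw [List.replicate_zero, List.nil_append] at ih'
      rw [phiAux_cons_replicate_append_replicate_of_ne hab, ih',
        List.count_cons_self, List.count_cons_of_ne hab, ← List.append_assoc, ← List.replicate_add]
      congr 2 <;> omega
    · rw [phiAux_cons_replicate_append_replicate, ih hxs, List.count_cons_self,
        List.count_cons_of_ne hab.symm]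
      congr 2; omega

theorem sortedWord_phi_cons (hab : a ≠ b) (l : List ℕ) (hl : ∀ x ∈ l, x = a ∨ x = b) :
    SortedWord (phi (a :: l)) := by
  have h := phiAux_replicate_append_replicate hab l hl 0 0
  rw [phi, phiAux]
  simp only [zero_add, List.replicate_zero, List.nil_append, List.replicate_one] at h
  rw [h]
  exact sortedWord_replicate_append_replicate _ _ _ _

end TwoLetters

/-- Any word with exactly 2 distinct letters is sorted by one application of φ_{aba}. -/
theorem stmt10 (p : List ℕ) (h : Nletters p = 2) : SortedWord (phi p) := by
  obtain ⟨x, y, hxy, hset⟩ := Finset.card_eq_two.mp h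
  have hp : ∀ z ∈ p, z = x ∨ z = y := fun z hz => by
    simpa [hset] using List.mem_toFinset.mpr hz
  cases p with
  | nil => exact fun i => by rw [phi, phiAux] at i; exact i.elim0
  | cons a l =>
    have hl := fun z hz => hp z (List.mem_cons_of_mem a hz)
    rcases hp a List.mem_cons_self with rfl | rfl
    · exact sortedWord_phi_cons hxy l hl
    · exact sortedWord_phi_cons hxy.symm l fun z hz => (hl z hz).symm
end

section
/- At any point during the execution of φ_{aba}, the letters currently in the stack are such that no letter appears in two positions of the stack with a different letter between them; equivalently, the occurrences of each letter in the stack are consecutive. -/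
/-- One step of the φ_{aba} machine on a state (output, stack, remaining input):
pop (appending the stack top to the output) if pushing the next input letter would
create a subsequence of the stack equivalent to aba, or if the input is exhausted;
otherwise push the next input letter. -/
def stepPhi : List ℕ × List ℕ × List ℕ → List ℕ × List ℕ × List ℕ
  | (out, [], []) => (out, [], [])
  | (out, t :: st, []) => (out ++ [t], st, [])
  | (out, st, x :: xs) =>
      if HasABA (x :: st) then
        match st with
        | [] => (out, [x], xs)
        | t :: st' => (out ++ [t], st', x :: xs)
      else (out, x :: st, xs)


lemma hasABA_cons {a : ℕ} {l : List ℕ} (h : HasABA l) : HasABA (a :: l) := by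
  obtain ⟨i, j, k, hij, hjk, he, hne⟩ := h
  exact ⟨i.succ, j.succ, k.succ, by simpa using hij, by simpa using hjk,
    by simpa using he, by simpa using hne⟩

lemma not_hasABA_singleton (x : ℕ) : ¬ HasABA [x] := by
  rintro ⟨i, j, k, hij, hjk, -, -⟩
  have hi := i.isLt; have hj := j.isLt
  simp only [List.length_singleton] at hi hj
  omega

lemma not_hasABA_nil : ¬ HasABA ([] : List ℕ) := by
  rintro ⟨i, -⟩; exact absurd i.isLt (by simp)

lemma step_inv (s : List ℕ × List ℕ × List ℕ) (h : ¬ HasABA s.2.1) :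
    ¬ HasABA (stepPhi s).2.1 := by
  obtain ⟨out, st, inp⟩ := s
  match st, inp with
  | [], [] => simpa [stepPhi] using h
  | t :: st, [] =>
      simp only [stepPhi]
      exact fun hl => h (hasABA_cons hl)
  | st, x :: xs =>
      simp only [stepPhi]
      split
      · match st with
        | [] => exact not_hasABA_singleton x
        | t :: st' => exact fun hl => h (hasABA_cons hl)
      · assumption

/-- At any point during the execution of φ_{aba}, the stack contains no letter in two
positions with a different letter between them; equivalently, the occurrences of each
letter in the stack are consecutive. -/
theorem stmt13 (p : List ℕ) (n : ℕ) :
    ¬ HasABA (stepPhi^[n] ([], [], p)).2.1 ∧ SortedWord (stepPhi^[n] ([], [], p)).2.1 := by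
  induction n with
  | zero => exact ⟨not_hasABA_nil, fun i => absurd i.isLt (by simp)⟩
  | succ n ih =>
      rw [Function.iterate_succ_apply']
      have h := step_inv _ ih.1
      refine ⟨h, fun i j k hij hjk he => ?_⟩
      by_contra hne
      exact h ⟨i, j, k, hij, hjk, he, hne⟩
end
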